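/- arXiv:1812.03734 — 4 statements merged into one kernel-verified Lean document; each statement's English description precedes it below -/
import Mathlib

section
/- For natural numbers m₁, m₂, m₃ and k ∈ {3,4,6}, the triple sum H_k(m₁,m₂,m₃) = Σ_{p₁=m₂+m₃}^{m₁+m₂+m₃} Σ_{p₂=m₃}^{m₂+m₃} C_k(p₁,p₂) depends only on m₁ mod k and m₂ mod k (and not on m₃). -/
/-!
Multiplying by `ξ - ξ⁻¹` telescopes `C_k(p₁,p₂)` into `ξ^(p₁-p₂+1) - ξ^(-(p₁-p₂+1))`, so
`(ξ - ξ⁻¹) H_k(m₁,m₂,m₃)` becomes a combination of products of the geometric sums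
`∑_{i ≤ m} ξ^(±i)` for `m = m₁, m₂` and of `ξ^(±(m₂+1))`, in which `m₃` cancels. Since `ξ^k = 1`
and `ξ^(±1) ≠ 1`, each of these depends only on `m mod k`; and `ξ - ξ⁻¹ ≠ 0` because `k > 2`.
-/

/-- `C_k(p₁,p₂) = Σ_{q=p₂}^{p₁} ξ_k^{2q-(p₁+p₂)}` with `ξ_k = e^{2πi/k}`. -/
noncomputable def Csum (k p₁ p₂ : ℕ) : ℂ :=
  ∑ q ∈ Finset.Icc p₂ p₁,
    Complex.exp (2 * Real.pi * Complex.I / k) ^ (2 * (q : ℤ) - ((p₁ : ℤ) + (p₂ : ℤ)))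

/-- `H_k(m₁,m₂,m₃) = Σ_{p₁=m₂+m₃}^{m₁+m₂+m₃} Σ_{p₂=m₃}^{m₂+m₃} C_k(p₁,p₂)`. -/
noncomputable def Hsum (k m₁ m₂ m₃ : ℕ) : ℂ :=
  ∑ p₁ ∈ Finset.Icc (m₂ + m₃) (m₁ + m₂ + m₃), ∑ p₂ ∈ Finset.Icc m₃ (m₂ + m₃),
    Csum k p₁ p₂

open Finset

section
variable {K : Type*} [Field K]

theorem geom_sum_eq_of_modEq {w : K} (hw : w ≠ 1) {k : ℕ} (hk : w ^ k = 1) {m n : ℕ}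
    (h : m ≡ n [MOD k]) : ∑ i ∈ range m, w ^ i = ∑ i ∈ range n, w ^ i := by
  rw [geom_sum_eq hw, geom_sum_eq hw, pow_eq_pow_of_modEq h hk]

theorem sum_Icc_add_pow (w : K) (a m : ℕ) :
    ∑ p ∈ Icc a (m + a), w ^ p = w ^ a * ∑ i ∈ range (m + 1), w ^ i := by
  rw [← Ico_add_one_right_eq_Icc, sum_Ico_eq_sum_range, mul_sum]
  simp only [pow_add, show m + a + 1 - a = m + 1 by omega]

theorem sub_inv_mul_sum_Icc_zpow {z : K} (hz : z ≠ 0) {p₁ p₂ : ℕ} (h : p₂ ≤ p₁ + 1) :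
    (z - z⁻¹) * ∑ q ∈ Icc p₂ p₁, z ^ (2 * (q : ℤ) - ((p₁ : ℤ) + (p₂ : ℤ))) =
      z * z ^ p₁ * z⁻¹ ^ p₂ - z⁻¹ * z⁻¹ ^ p₁ * z ^ p₂ := by
  set f : ℕ → K := fun q ↦ z ^ (2 * (q : ℤ) - p₁ - p₂ - 1)
  have step (q : ℕ) :
      (z - z⁻¹) * z ^ (2 * (q : ℤ) - ((p₁ : ℤ) + (p₂ : ℤ))) = f (q + 1) - f q := by
    simp only [f, sub_mul, zpow_sub₀ hz, zpow_add₀ hz, zpow_mul, zpow_natCast, zpow_one]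
    field_simp
    ring
  rw [mul_sum, ← Ico_add_one_right_eq_Icc, sum_congr rfl fun q _ ↦ step q, sum_Ico_sub f h]
  simp only [f, zpow_sub₀ hz, zpow_mul, zpow_natCast, zpow_one, inv_pow]
  field_simp
  ring

theorem sub_inv_mul_sum_Icc_sum_Icc_sum_Icc_zpow {z : K} (hz : z ≠ 0) (m₁ m₂ m₃ : ℕ) :
    (z - z⁻¹) * ∑ p₁ ∈ Icc (m₂ + m₃) (m₁ + m₂ + m₃), ∑ p₂ ∈ Icc m₃ (m₂ + m₃),
        ∑ q ∈ Icc p₂ p₁, z ^ (2 * (q : ℤ) - ((p₁ : ℤ) + (p₂ : ℤ))) =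
      z ^ (m₂ + 1) * (∑ i ∈ range (m₁ + 1), z ^ i) * ∑ i ∈ range (m₂ + 1), z⁻¹ ^ i -
        z⁻¹ ^ (m₂ + 1) * (∑ i ∈ range (m₁ + 1), z⁻¹ ^ i) * ∑ i ∈ range (m₂ + 1), z ^ i := by
  calc _ = ∑ p₁ ∈ Icc (m₂ + m₃) (m₁ + m₂ + m₃), ∑ p₂ ∈ Icc m₃ (m₂ + m₃),
        (z * z ^ p₁ * z⁻¹ ^ p₂ - z⁻¹ * z⁻¹ ^ p₁ * z ^ p₂) := by
        rw [mul_sum]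
        refine sum_congr rfl fun p₁ hp₁ ↦ ?_
        rw [mul_sum]
        refine sum_congr rfl fun p₂ hp₂ ↦ sub_inv_mul_sum_Icc_zpow hz ?_
        simp only [mem_Icc] at hp₁ hp₂
        omega
    _ = z * (∑ p₁ ∈ Icc (m₂ + m₃) (m₁ + (m₂ + m₃)), z ^ p₁) *
          ∑ p₂ ∈ Icc m₃ (m₂ + m₃), z⁻¹ ^ p₂ -
        z⁻¹ * (∑ p₁ ∈ Icc (m₂ + m₃) (m₁ + (m₂ + m₃)), z⁻¹ ^ p₁) *
          ∑ p₂ ∈ Icc m₃ (m₂ + m₃), z ^ p₂ := by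
        rw [mul_assoc, mul_assoc, sum_mul_sum, sum_mul_sum, mul_sum, mul_sum, ← sum_sub_distrib,
          add_assoc]
        simp only [mul_sum, ← sum_sub_distrib, mul_assoc]
    _ = _ := by
        have cancel : z ^ m₃ * z⁻¹ ^ m₃ = 1 := by rw [← mul_pow, mul_inv_cancel₀ hz, one_pow]
        rw [sum_Icc_add_pow, sum_Icc_add_pow, sum_Icc_add_pow, sum_Icc_add_pow]
        linear_combination (z ^ (m₂ + 1) * (∑ i ∈ range (m₁ + 1), z ^ i) *
            (∑ i ∈ range (m₂ + 1), z⁻¹ ^ i) - z⁻¹ ^ (m₂ + 1) * (∑ i ∈ range (m₁ + 1), z⁻¹ ^ i) *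
            ∑ i ∈ range (m₂ + 1), z ^ i) * cancel

end

/-- for `k ∈ {3,4,6}`, the triple sum `H_k(m₁,m₂,m₃)` depends only
on `m₁ mod k` and `m₂ mod k` (and not on `m₃`). -/
theorem stmt11 :
    ∀ k ∈ ({3, 4, 6} : Set ℕ), ∀ m₁ m₂ m₃ n₁ n₂ n₃ : ℕ,
      m₁ % k = n₁ % k → m₂ % k = n₂ % k → Hsum k m₁ m₂ m₃ = Hsum k n₁ n₂ n₃ := by
  intro k hk m₁ m₂ m₃ n₁ n₂ n₃ h₁ h₂
  have hk2 : 2 < k := by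
    simp only [Set.mem_insert_iff, Set.mem_singleton_iff] at hk
    omega
  set ξ := Complex.exp (2 * Real.pi * Complex.I / k)
  have hξ : IsPrimitiveRoot ξ k := Complex.isPrimitiveRoot_exp k (by omega)
  have hξ' : IsPrimitiveRoot ξ⁻¹ k := hξ.inv
  have hξ0 : ξ ≠ 0 := hξ.ne_zero (by omega)
  have hsub : ξ - ξ⁻¹ ≠ 0 := by
    refine sub_ne_zero.2 fun h ↦ hξ.pow_ne_one_of_pos_of_lt two_ne_zero hk2 ?_
    rw [sq, ← mul_inv_cancel₀ hξ0, ← h]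
  have closed_form (a b c : ℕ) : (ξ - ξ⁻¹) * Hsum k a b c = _ :=
    sub_inv_mul_sum_Icc_sum_Icc_sum_Icc_zpow hξ0 a b c
  have h₁' : m₁ + 1 ≡ n₁ + 1 [MOD k] := Nat.ModEq.add_right 1 h₁
  have h₂' : m₂ + 1 ≡ n₂ + 1 [MOD k] := Nat.ModEq.add_right 1 h₂
  apply mul_left_cancel₀ hsub
  rw [closed_form, closed_form, pow_eq_pow_of_modEq h₂' hξ.pow_eq_one,
    pow_eq_pow_of_modEq h₂' hξ'.pow_eq_one,
    geom_sum_eq_of_modEq (hξ.ne_one (by omega)) hξ.pow_eq_one h₁',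
    geom_sum_eq_of_modEq (hξ.ne_one (by omega)) hξ.pow_eq_one h₂',
    geom_sum_eq_of_modEq (hξ'.ne_one (by omega)) hξ'.pow_eq_one h₁',
    geom_sum_eq_of_modEq (hξ'.ne_one (by omega)) hξ'.pow_eq_one h₂']
end

section
/- For natural numbers m₁, m₂ with m₁ ≡ i-1 mod 6 and m₂ ≡ j-1 mod 6 (1 ≤ i,j ≤ 6), the double sum H₆(m₁,m₂) = Σ_{p₁=m₂}^{m₁+m₂} Σ_{p₂=0}^{m₂} C₆(p₁,p₂) equals the (i,j)-entry of the 6×6 matrix with rows (1,2,2,1,0,0), (2,3,2,0,-1,0), (2,2,0,-2,-2,0), (1,0,-2,-3,-2,0), (0,-1,-2,-2,-1,0), (0,0,0,0,0,0). -/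
/-- `C₆(p₁,p₂)`: the 6-periodic function of `p₁ - p₂` taking values
`1, 1, 0, -1, -1, 0` for `p₁ - p₂ ≡ 0, 1, 2, 3, 4, 5 mod 6`. -/
def C6 (p₁ p₂ : ℕ) : ℤ := ![1, 1, 0, -1, -1, 0] ⟨(p₁ - p₂) % 6, by omega⟩

/-- The matrix `M₆`. -/
def M6 : Fin 6 → Fin 6 → ℤ :=
  ![![1, 2, 2, 1, 0, 0],
    ![2, 3, 2, 0, -1, 0],
    ![2, 2, 0, -2, -2, 0],
    ![1, 0, -2, -3, -2, 0],
    ![0, -1, -2, -2, -1, 0],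
    ![0, 0, 0, 0, 0, 0]]

/-!
Writing `p₁ = m₂ + a` and `p₂ = m₂ - b`, the summand `C₆(p₁, p₂)` becomes `c(a + b)` with
`c(n) = C₆(n, 0)`, so `H₆(m₁, m₂)` is the sum of `c(a + b)` over the box `[0, m₁] × [0, m₂]`.
Since `c` is 6-periodic and sums to zero over a period, enlarging one side of the box by 6 adds
six consecutive values of `c` along each line of the box, hence nothing. So `H₆(m₁, m₂)` only
depends on the residues of `m₁` and `m₂` mod 6, and the 36 remaining values are computed directly.
-/

open Finset Function

theorem Function.Periodic.sum_range_add {M : Type*} [AddCancelCommMonoid M] {f : ℕ → M} {n : ℕ}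
    (hf : Periodic f n) (b : ℕ) : ∑ k ∈ range n, f (b + k) = ∑ k ∈ range n, f k := by
  induction b with
  | zero => simp
  | succ b ih =>
    rw [← ih]
    apply add_right_cancel (b := f b)
    calc ∑ k ∈ range n, f (b + 1 + k) + f b
        = ∑ k ∈ range (n + 1), f (b + k) := by
          rw [sum_range_succ', add_zero]; simp only [add_assoc, add_comm 1]
      _ = ∑ k ∈ range n, f (b + k) + f b := by rw [sum_range_succ, hf]

section BoxSum

variable {M : Type*} [AddCommMonoid M]

def boxSum (f : ℕ → M) (m₁ m₂ : ℕ) : M :=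
  ∑ a ∈ range (m₁ + 1), ∑ b ∈ range (m₂ + 1), f (a + b)

theorem boxSum_comm (f : ℕ → M) (m₁ m₂ : ℕ) : boxSum f m₁ m₂ = boxSum f m₂ m₁ := by
  rw [boxSum, sum_comm]
  exact sum_congr rfl fun _ _ => sum_congr rfl fun _ _ => by rw [add_comm]

end BoxSum

section PeriodicBoxSum

variable {M : Type*} [AddCancelCommMonoid M] {f : ℕ → M} {n : ℕ}

theorem boxSum_add_period (hf : Periodic f n) (h₀ : ∑ k ∈ range n, f k = 0) (m₁ m₂ : ℕ) :
    boxSum f (m₁ + n) m₂ = boxSum f m₁ m₂ := by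
  rw [boxSum, add_right_comm, sum_range_add, sum_comm (s := range n)]
  have hline (b : ℕ) : ∑ k ∈ range n, f (m₁ + 1 + k + b) = 0 := by
    simpa only [add_right_comm _ _ b, h₀] using hf.sum_range_add (m₁ + 1 + b)
  simp only [hline, sum_const_zero, add_zero, boxSum]

theorem boxSum_add_mul_period (hf : Periodic f n) (h₀ : ∑ k ∈ range n, f k = 0) (r q m₂ : ℕ) :
    boxSum f (r + n * q) m₂ = boxSum f r m₂ := by
  induction q with
  | zero => simp
  | succ q ih => rw [mul_add_one, ← add_assoc, boxSum_add_period hf h₀, ih]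

theorem boxSum_mod_left (hf : Periodic f n) (h₀ : ∑ k ∈ range n, f k = 0) (m₁ m₂ : ℕ) :
    boxSum f m₁ m₂ = boxSum f (m₁ % n) m₂ := by
  conv_lhs => rw [← Nat.mod_add_div m₁ n]
  exact boxSum_add_mul_period hf h₀ _ _ _

theorem boxSum_mod (hf : Periodic f n) (h₀ : ∑ k ∈ range n, f k = 0) (m₁ m₂ : ℕ) :
    boxSum f m₁ m₂ = boxSum f (m₁ % n) (m₂ % n) := by
  rw [boxSum_mod_left hf h₀, boxSum_comm, boxSum_mod_left hf h₀ m₂, boxSum_comm]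

end PeriodicBoxSum

theorem C6_eq_sub (p₁ p₂ : ℕ) : C6 p₁ p₂ = C6 (p₁ - p₂) 0 := rfl

theorem C6_periodic : Periodic (C6 · 0) 6 := fun k => by simp [C6]

theorem sum_range_six_C6 : ∑ k ∈ range 6, C6 k 0 = 0 := by decide

theorem sum_C6_eq_boxSum (m₁ m₂ : ℕ) :
    ∑ p₁ ∈ Icc m₂ (m₁ + m₂), ∑ p₂ ∈ Icc 0 m₂, C6 p₁ p₂ = boxSum (C6 · 0) m₁ m₂ := by
  rw [← Nat.range_succ_eq_Icc_zero, ← Ico_add_one_right_eq_Icc, sum_Ico_eq_sum_range,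
    show m₁ + m₂ + 1 - m₂ = m₁ + 1 by omega, boxSum]
  refine sum_congr rfl fun a _ => ?_
  rw [← sum_range_reflect]
  refine sum_congr rfl fun b hb => ?_
  have hsub : m₂ + a - (m₂ + 1 - 1 - b) = a + b := by rw [mem_range] at hb; omega
  rw [C6_eq_sub, hsub]

theorem boxSum_C6_eq_M6 : ∀ a b : Fin 6, boxSum (C6 · 0) a b = M6 a b := by decide

/-- `H₆(m₁,m₂) = Σ_{p₁=m₂}^{m₁+m₂} Σ_{p₂=0}^{m₂} C₆(p₁,p₂)` equals
the entry of `M₆` indexed by the residues of `m₁` and `m₂` mod 6. -/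
theorem stmt12 (m₁ m₂ : ℕ) :
    (∑ p₁ ∈ Finset.Icc m₂ (m₁ + m₂), ∑ p₂ ∈ Finset.Icc 0 m₂, C6 p₁ p₂) =
      M6 ⟨m₁ % 6, by omega⟩ ⟨m₂ % 6, by omega⟩ := by
  rw [sum_C6_eq_boxSum, boxSum_mod C6_periodic sum_range_six_C6]
  exact boxSum_C6_eq_M6 ⟨m₁ % 6, by omega⟩ ⟨m₂ % 6, by omega⟩
end

section
/- For natural numbers m₁, m₂ with m₁ ≡ i-1 mod 4 and m₂ ≡ j-1 mod 4 (1 ≤ i,j ≤ 4), the double sum H₄(m₁,m₂) = Σ_{p₁=m₂}^{m₁+m₂} Σ_{p₂=0}^{m₂} C₄(p₁,p₂) equals the (i,j)-entry of the 4×4 matrix with rows (1,1,0,0), (1,0,-1,0), (0,-1,-1,0), (0,0,0,0). -/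
/-!
`C₄(p₁, p₂)` is the real part of `i ^ (p₁ - p₂)`, so on `p₂ ≤ p₁` it changes sign when either
argument moves by two. Hence any four consecutive values in either argument cancel, which makes
`H₄(m₁, m₂)` four-periodic in `m₁` and in `m₂`, and the sixteen values with `m₁, m₂ < 4` are
computed directly.
-/

open Finset

def C4 (p₁ p₂ : ℕ) : ℤ := ![1, 0, -1, 0] ⟨(p₁ - p₂) % 4, by omega⟩

def M4 : Fin 4 → Fin 4 → ℤ :=
  ![![1, 1, 0, 0],
    ![1, 0, -1, 0],
    ![0, -1, -1, 0],
    ![0, 0, 0, 0]]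

def H4 (m₁ m₂ : ℕ) : ℤ := ∑ p₁ ∈ Icc m₂ (m₁ + m₂), ∑ p₂ ∈ Icc 0 m₂, C4 p₁ p₂

lemma sum_range_four_eq_zero {M : Type*} [AddCommGroup M] (f : ℕ → M) (n : ℕ)
    (h₀ : f (n + 2) = -f n) (h₁ : f (n + 3) = -f (n + 1)) :
    ∑ k ∈ range 4, f (n + k) = 0 := by
  simp only [sum_range_succ, sum_range_zero, add_zero, h₀, h₁]
  abel

lemma C4_congr {p₁ p₂ q₁ q₂ : ℕ} (h : (p₁ - p₂) % 4 = (q₁ - q₂) % 4) : C4 p₁ p₂ = C4 q₁ q₂ := by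
  simp only [C4, h]

lemma C4_add_two_left {p₁ p₂ : ℕ} (h : p₂ ≤ p₁) : C4 (p₁ + 2) p₂ = -C4 p₁ p₂ := by
  obtain hr | hr | hr | hr : (p₁ - p₂) % 4 = 0 ∨ (p₁ - p₂) % 4 = 1 ∨ (p₁ - p₂) % 4 = 2 ∨
      (p₁ - p₂) % 4 = 3 := by omega
  all_goals
    simp only [C4, hr, show (p₁ + 2 - p₂) % 4 = ((p₁ - p₂) % 4 + 2) % 4 by omega]
    rfl

lemma C4_add_two_right {p₁ p₂ : ℕ} (h : p₂ + 2 ≤ p₁) : C4 p₁ (p₂ + 2) = -C4 p₁ p₂ := by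
  calc C4 p₁ (p₂ + 2) = C4 (p₁ - 2) p₂ := C4_congr (by omega)
    _ = -C4 (p₁ - 2 + 2) p₂ := by rw [C4_add_two_left (by omega), neg_neg]
    _ = -C4 p₁ p₂ := by rw [Nat.sub_add_cancel (by omega)]

lemma H4_eq_sum_range (m₁ m₂ : ℕ) :
    H4 m₁ m₂ = ∑ a ∈ range (m₁ + 1), ∑ b ∈ range (m₂ + 1), C4 (m₂ + a) b := by
  rw [H4, ← Nat.range_succ_eq_Icc_zero, ← Ico_add_one_right_eq_Icc, sum_Ico_eq_sum_range,
    Nat.add_right_comm, Nat.add_sub_cancel]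

lemma H4_periodic_left (m₂ : ℕ) : Function.Periodic (H4 · m₂) 4 := by
  intro m₁
  have tail : ∑ k ∈ range 4, ∑ b ∈ range (m₂ + 1), C4 (m₂ + (m₁ + 1 + k)) b = 0 := by
    rw [sum_comm]
    refine sum_eq_zero fun b hb ↦ ?_
    have hb : b ≤ m₂ + (m₁ + 1) := by simp only [mem_range] at hb; omega
    simp only [← add_assoc]
    exact sum_range_four_eq_zero (C4 · b) _ (C4_add_two_left hb) (C4_add_two_left (by omega))
  dsimp only
  rw [H4_eq_sum_range, H4_eq_sum_range, add_right_comm m₁ 4 1, sum_range_add, tail, add_zero]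

lemma H4_periodic_right (m₁ : ℕ) : Function.Periodic (H4 m₁) 4 := by
  intro m₂
  rw [H4_eq_sum_range, H4_eq_sum_range]
  refine sum_congr rfl fun a _ ↦ ?_
  have tail : ∑ k ∈ range 4, C4 (m₂ + 4 + a) (m₂ + 1 + k) = 0 :=
    sum_range_four_eq_zero _ _ (C4_add_two_right (by omega)) (C4_add_two_right (by omega))
  rw [add_right_comm m₂ 4 1, sum_range_add, tail, add_zero]
  refine sum_congr rfl fun b hb ↦ C4_congr ?_
  simp only [mem_range] at hb
  omega

lemma H4_of_lt_four : ∀ i j : Fin 4, H4 i j = M4 i j := by decide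

/-- `H₄(m₁,m₂) = Σ_{p₁=m₂}^{m₁+m₂} Σ_{p₂=0}^{m₂} C₄(p₁,p₂)` equals
the entry of `M₄` indexed by the residues of `m₁` and `m₂` mod 4. -/
theorem stmt13 (m₁ m₂ : ℕ) :
    (∑ p₁ ∈ Finset.Icc m₂ (m₁ + m₂), ∑ p₂ ∈ Finset.Icc 0 m₂, C4 p₁ p₂) =
      M4 ⟨m₁ % 4, by omega⟩ ⟨m₂ % 4, by omega⟩ := by
  change H4 m₁ m₂ = _
  rw [← (H4_periodic_left m₂).map_mod_nat, ← (H4_periodic_right _).map_mod_nat]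
  exact H4_of_lt_four ⟨m₁ % 4, by omega⟩ ⟨m₂ % 4, by omega⟩
end

section
/- For natural numbers m₁, m₂, the double sum H₃(m₁,m₂) = Σ_{p₁=m₂}^{m₁+m₂} Σ_{p₂=0}^{m₂} C₃(p₁,p₂) equals: 1 if m₁ ≡ 0 and m₂ ≡ 0 mod 3; -1 if m₁ ≡ 1 and m₂ ≡ 1 mod 3; and 0 in all other cases. -/
/-!
Substituting `p₁ = m₂ + i` and `p₂ = m₂ - j` turns the summand into `C₃(i + j, 0)`, a function of
`i + j` that has period 3 and vanishes when summed over a period. Hence a sum over `i < m₁ + 1`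
(or `j < m₂ + 1`) may be shortened to one over `i < (m₁ + 1) % 3`, which leaves at most a
`2 × 2` block to evaluate.
-/

/-- `C₃(p₁,p₂)`: the 3-periodic function of `p₁ - p₂` taking values
`1, -1, 0` for `p₁ - p₂ ≡ 0, 1, 2 mod 3`. -/
def C3 (p₁ p₂ : ℕ) : ℤ := ![1, -1, 0] ⟨(p₁ - p₂) % 3, by omega⟩

open Finset

theorem Finset.sum_range_eq_sum_range_mod {M : Type*} [AddCommMonoid M] {f : ℕ → M} {p : ℕ}
    (hf : ∀ n, ∑ k ∈ range p, f (n + k) = 0) (m : ℕ) :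
    ∑ i ∈ range m, f i = ∑ i ∈ range (m % p), f i := by
  have drop_periods : ∀ q r, ∑ i ∈ range (r + p * q), f i = ∑ i ∈ range r, f i := by
    intro q r
    induction q with
    | zero => simp
    | succ q ih => rw [Nat.mul_succ, ← add_assoc, sum_range_add, hf, add_zero, ih]
  rw [← drop_periods (m / p) (m % p), Nat.mod_add_div]

theorem sum_range_three_C3 (n : ℕ) : ∑ k ∈ range 3, C3 (n + k) 0 = 0 := by
  obtain h | h | h : n % 3 = 0 ∨ n % 3 = 1 ∨ n % 3 = 2 := by omega
  all_goals simp [sum_range_succ, C3, Nat.add_mod n, h]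

theorem sum_Icc_C3_eq_sum_range (m₁ m₂ : ℕ) :
    ∑ p₁ ∈ Icc m₂ (m₁ + m₂), ∑ p₂ ∈ Icc 0 m₂, C3 p₁ p₂ =
      ∑ i ∈ range (m₁ + 1), ∑ j ∈ range (m₂ + 1), C3 (i + j) 0 := by
  rw [← Ico_add_one_right_eq_Icc, sum_Ico_eq_sum_range, add_right_comm, Nat.add_sub_cancel]
  refine sum_congr rfl fun i _ => ?_
  rw [← Ico_add_one_right_eq_Icc, Nat.Ico_zero_eq_range, ← sum_range_reflect]
  refine sum_congr rfl fun j hmem => ?_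
  have hj : j ≤ m₂ := Nat.lt_succ_iff.mp (mem_range.mp hmem)
  simp only [C3]
  congr 3
  omega

theorem sum_range_sum_range_C3_eq_mod (a b : ℕ) :
    ∑ i ∈ range a, ∑ j ∈ range b, C3 (i + j) 0 =
      ∑ i ∈ range (a % 3), ∑ j ∈ range (b % 3), C3 (i + j) 0 := by
  have inner_period : ∀ i n, ∑ k ∈ range 3, C3 (i + (n + k)) 0 = 0 := fun i n => by
    simpa only [add_assoc] using sum_range_three_C3 (i + n)
  have outer_period : ∀ n, ∑ k ∈ range 3, ∑ j ∈ range b, C3 (n + k + j) 0 = 0 := fun n => by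
    rw [sum_comm]
    refine sum_eq_zero fun j _ => ?_
    simpa only [add_right_comm n] using sum_range_three_C3 (n + j)
  rw [sum_range_eq_sum_range_mod outer_period]
  exact sum_congr rfl fun i _ => sum_range_eq_sum_range_mod (inner_period i) b

/-- `H₃(m₁,m₂) = Σ_{p₁=m₂}^{m₁+m₂} Σ_{p₂=0}^{m₂} C₃(p₁,p₂)` equals
`1` if `m₁ ≡ 0` and `m₂ ≡ 0 mod 3`, `-1` if `m₁ ≡ 1` and `m₂ ≡ 1 mod 3`, and
`0` in all other cases. -/
theorem stmt14 (m₁ m₂ : ℕ) :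
    (m₁ % 3 = 0 → m₂ % 3 = 0 →
      (∑ p₁ ∈ Finset.Icc m₂ (m₁ + m₂), ∑ p₂ ∈ Finset.Icc 0 m₂, C3 p₁ p₂) = 1) ∧
    (m₁ % 3 = 1 → m₂ % 3 = 1 →
      (∑ p₁ ∈ Finset.Icc m₂ (m₁ + m₂), ∑ p₂ ∈ Finset.Icc 0 m₂, C3 p₁ p₂) = -1) ∧
    (¬(m₁ % 3 = 0 ∧ m₂ % 3 = 0) → ¬(m₁ % 3 = 1 ∧ m₂ % 3 = 1) →
      (∑ p₁ ∈ Finset.Icc m₂ (m₁ + m₂), ∑ p₂ ∈ Finset.Icc 0 m₂, C3 p₁ p₂) = 0) := by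
  rw [sum_Icc_C3_eq_sum_range, sum_range_sum_range_C3_eq_mod, Nat.add_mod m₁, Nat.add_mod m₂]
  have h₁ : m₁ % 3 < 3 := Nat.mod_lt _ (by norm_num)
  have h₂ : m₂ % 3 < 3 := Nat.mod_lt _ (by norm_num)
  generalize m₁ % 3 = a at *
  generalize m₂ % 3 = b at *
  interval_cases a <;> interval_cases b <;> decide
end
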